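/- On ℝ², define the probability measures μ = (1/4)δ_{(−1/2, 2)} + (1/4)δ_{(−1/2, −2)} + (1/2)δ_{(1/2, 0)} and ν = (1/4)δ_{(−1/2, −2)} + (1/4)δ_{(−1/2, 0)} + (1/4)δ_{(1/2, −2)} + (1/4)δ_{(1/2, 2)}. Define the probability measures on ℝ² × ℝ²: π_KR = (1/4)δ_{((−1/2,−2),(−1/2,−2))} + (1/4)δ_{((−1/2,2),(−1/2,0))} + (1/4)δ_{((1/2,0),(1/2,−2))} + (1/4)δ_{((1/2,0),(1/2,2))} and π_AT = (1/4)δ_{((−1/2,−2),(1/2,−2))} + (1/4)δ_{((−1/2,2),(1/2,2))} + (1/4)δ_{((1/2,0),(−1/2,−2))} + (1/4)δ_{((1/2,0),(−1/2,0))}. Then: (a) both π_KR and π_AT are couplings of (μ, ν) and both are bicausal; (b) ∫ (|x₁ − y₁|² + |x₂ − y₂|²) dπ_KR = 3 and ∫ (|x₁ − y₁|² + |x₂ − y₂|²) dπ_AT = 2; consequently the infimum of this quadratic cost over bicausal couplings of (μ, ν) is at most 2, and π_KR (the Knothe–Rosenblatt rearrangement of μ and ν) does not attain it. -/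

import Mathlib

open MeasureTheory
open scoped ENNReal

noncomputable section

/-- Conditional independence of the σ-algebras `m₁` and `m₂` given `m'`, under `π`:
the conditional expectation of the product of indicators factorizes. -/
def CondIndepGiven {X : Type*} [mX : MeasurableSpace X] (m' m₁ m₂ : MeasurableSpace X)
    (π : @MeasureTheory.Measure X mX) : Prop :=
  ∀ s t : Set X, MeasurableSet[m₁] s → MeasurableSet[m₂] t →
    MeasureTheory.condExp m' π ((s ∩ t).indicator fun _ => (1 : ℝ)) =ᵐ[π]
      fun ω => MeasureTheory.condExp m' π (s.indicator fun _ => (1 : ℝ)) ω *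
        MeasureTheory.condExp m' π (t.indicator fun _ => (1 : ℝ)) ω

/-- A coupling `π` on `(ℝ×ℝ) × (ℝ×ℝ)` (two two-step processes) is bicausal: given
`σ(x₁)`, `σ(y₁)` is conditionally independent of `σ(x₁,x₂)`, and symmetrically with the
roles of `x` and `y` exchanged. -/
def IsBicausal2 (π : Measure ((ℝ × ℝ) × (ℝ × ℝ))) : Prop :=
  CondIndepGiven (X := (ℝ × ℝ) × (ℝ × ℝ)) (MeasurableSpace.comap (fun q => q.1.1) inferInstance)
    (MeasurableSpace.comap (fun q => q.2.1) inferInstance)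
    (MeasurableSpace.comap Prod.fst inferInstance) π ∧
  CondIndepGiven (X := (ℝ × ℝ) × (ℝ × ℝ)) (MeasurableSpace.comap (fun q => q.2.1) inferInstance)
    (MeasurableSpace.comap (fun q => q.1.1) inferInstance)
    (MeasurableSpace.comap Prod.snd inferInstance) π

/-- The first marginal `μ = (1/4)δ_{(-1/2,2)} + (1/4)δ_{(-1/2,-2)} + (1/2)δ_{(1/2,0)}`. -/
def muEx : Measure (ℝ × ℝ) :=
  (1 / 4 : ℝ≥0∞) • Measure.dirac (-(1 / 2), 2) + (1 / 4 : ℝ≥0∞) • Measure.dirac (-(1 / 2), -2) +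
    (1 / 2 : ℝ≥0∞) • Measure.dirac (1 / 2, 0)

/-- The second marginal
`ν = (1/4)δ_{(-1/2,-2)} + (1/4)δ_{(-1/2,0)} + (1/4)δ_{(1/2,-2)} + (1/4)δ_{(1/2,2)}`. -/
def nuEx : Measure (ℝ × ℝ) :=
  (1 / 4 : ℝ≥0∞) • Measure.dirac (-(1 / 2), -2) + (1 / 4 : ℝ≥0∞) • Measure.dirac (-(1 / 2), 0) +
    (1 / 4 : ℝ≥0∞) • Measure.dirac (1 / 2, -2) + (1 / 4 : ℝ≥0∞) • Measure.dirac (1 / 2, 2)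

/-- The Knothe–Rosenblatt rearrangement of `(muEx, nuEx)`. -/
def piKR : Measure ((ℝ × ℝ) × (ℝ × ℝ)) :=
  (1 / 4 : ℝ≥0∞) • Measure.dirac ((-(1 / 2), -2), (-(1 / 2), -2)) +
    (1 / 4 : ℝ≥0∞) • Measure.dirac ((-(1 / 2), 2), (-(1 / 2), 0)) +
    (1 / 4 : ℝ≥0∞) • Measure.dirac ((1 / 2, 0), (1 / 2, -2)) +
    (1 / 4 : ℝ≥0∞) • Measure.dirac ((1 / 2, 0), (1 / 2, 2))

/-- The alternative bicausal coupling: antitone in the first step, then monotone. -/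
def piAT : Measure ((ℝ × ℝ) × (ℝ × ℝ)) :=
  (1 / 4 : ℝ≥0∞) • Measure.dirac ((-(1 / 2), -2), (1 / 2, -2)) +
    (1 / 4 : ℝ≥0∞) • Measure.dirac ((-(1 / 2), 2), (1 / 2, 2)) +
    (1 / 4 : ℝ≥0∞) • Measure.dirac ((1 / 2, 0), (-(1 / 2), -2)) +
    (1 / 4 : ℝ≥0∞) • Measure.dirac ((1 / 2, 0), (-(1 / 2), 0))

/- Under both π_KR and π_AT the first coordinates determine each other almost surely
(y₁ = x₁, resp. y₁ = -x₁). Conditioning on x₁ is then conditioning on y₁ as well, so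
σ(y₁) is trivially conditionally independent of anything given x₁, and vice versa: both
couplings are bicausal. The costs 3 and 2 are finite sums over four atoms. -/

theorem condIndepGiven_of_forall_ae_eq {X : Type*} {m' m₁ m₂ : MeasurableSpace X}
    [mX : MeasurableSpace X] {π : Measure X} [IsFiniteMeasure π] (hm' : m' ≤ mX) (hm₂ : m₂ ≤ mX)
    (h : ∀ s, MeasurableSet[m₁] s → ∃ s', MeasurableSet[m'] s' ∧ s =ᵐ[π] s') :
    CondIndepGiven m' m₁ m₂ π := by
  have := isFiniteMeasure_trim (μ := π) hm'
  intro s t hs ht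
  obtain ⟨s', hs', hss'⟩ := h s hs
  have hs'_ind : StronglyMeasurable[m'] (s'.indicator fun _ => (1 : ℝ)) :=
    stronglyMeasurable_const.indicator hs'
  have hint : ∀ {u : Set X}, MeasurableSet u → Integrable (u.indicator fun _ => (1 : ℝ)) π :=
    fun hu => (integrable_const 1).indicator hu
  have hcond_s : π[s.indicator fun _ => (1 : ℝ) | m'] =ᵐ[π] s'.indicator fun _ => 1 :=
    (condExp_congr_ae (indicator_ae_eq_of_ae_eq_set hss')).trans
      (condExp_of_stronglyMeasurable hm' hs'_ind (hint (hm' _ hs'))).eventuallyEq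
  have hinter : (s ∩ t).indicator (fun _ => (1 : ℝ)) =ᵐ[π]
      (s'.indicator fun _ => 1) * t.indicator fun _ => 1 :=
    (indicator_ae_eq_of_ae_eq_set (hss'.inter (ae_eq_refl t))).trans
      (Set.inter_indicator_one (s := s') (t := t)).eventuallyEq
  have hprod_int : Integrable ((s'.indicator fun _ => (1 : ℝ)) * t.indicator fun _ => 1) π :=
    (hint ((hm' _ hs').inter (hm₂ _ ht))).congr Set.inter_indicator_one.eventuallyEq
  calc π[(s ∩ t).indicator fun _ => (1 : ℝ) | m']
      =ᵐ[π] π[(s'.indicator fun _ => (1 : ℝ)) * t.indicator fun _ => 1 | m'] :=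
        condExp_congr_ae hinter
    _ =ᵐ[π] (s'.indicator fun _ => (1 : ℝ)) * π[t.indicator fun _ => 1 | m'] :=
        condExp_mul_of_stronglyMeasurable_left hs'_ind hprod_int (hint (hm₂ _ ht))
    _ =ᵐ[π] _ := by
      filter_upwards [hcond_s] with ω hω
      rw [Pi.mul_apply, hω]

theorem condIndepGiven_comap_of_ae_eq_comp {X β γ : Type*} {m₂ : MeasurableSpace X}
    [mX : MeasurableSpace X] [MeasurableSpace β] [MeasurableSpace γ] {π : Measure X}
    [IsFiniteMeasure π] {f : X → β} {g : X → γ} {φ : β → γ}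
    (hf : Measurable f) (hφ : Measurable φ) (hm₂ : m₂ ≤ mX) (hg : ∀ᵐ ω ∂π, g ω = φ (f ω)) :
    CondIndepGiven (.comap f inferInstance) (.comap g inferInstance) m₂ π := by
  refine condIndepGiven_of_forall_ae_eq hf.comap_le hm₂ ?_
  rintro _ ⟨B, hB, rfl⟩
  refine ⟨f ⁻¹' (φ ⁻¹' B), ⟨_, hφ hB, rfl⟩, ?_⟩
  filter_upwards [hg] with ω hω
  exact congrArg (· ∈ B) hω

theorem isBicausal2_of_ae_eq {π : Measure ((ℝ × ℝ) × (ℝ × ℝ))} [IsFiniteMeasure π]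
    {φ ψ : ℝ → ℝ} (hφ : Measurable φ) (hψ : Measurable ψ)
    (hy : ∀ᵐ q ∂π, q.2.1 = φ q.1.1) (hx : ∀ᵐ q ∂π, q.1.1 = ψ q.2.1) : IsBicausal2 π :=
  ⟨condIndepGiven_comap_of_ae_eq_comp (measurable_fst.comp measurable_fst) hφ
      measurable_fst.comap_le hy,
    condIndepGiven_comap_of_ae_eq_comp (measurable_fst.comp measurable_snd) hψ
      measurable_snd.comap_le hx⟩

section Dirac

variable {α E : Type*} [MeasurableSpace α] [MeasurableSingletonClass α]
  [NormedAddCommGroup E] [NormedSpace ℝ E] [CompleteSpace E]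

theorem integral_smul_dirac_add_four {c : ℝ≥0∞} (hc : c ≠ ∞) (f : α → E) (a b d e : α) :
    ∫ x, f x ∂(c • Measure.dirac a + c • Measure.dirac b + c • Measure.dirac d +
      c • Measure.dirac e) = c.toReal • (f a + f b + f d + f e) := by
  have hint : ∀ x, Integrable f (c • Measure.dirac x) :=
    fun x => (integrable_dirac enorm_lt_top).smul_measure hc
  rw [integral_add_measure (((hint a).add_measure (hint b)).add_measure (hint d)) (hint e),
    integral_add_measure ((hint a).add_measure (hint b)) (hint d),
    integral_add_measure (hint a) (hint b)]
  simp only [integral_smul_measure, integral_dirac, smul_add]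

end Dirac

theorem ENNReal.one_fourth_add_one_fourth : (1 / 4 : ℝ≥0∞) + 1 / 4 = 1 / 2 := by
  rw [ENNReal.div_add_div_same, ENNReal.div_eq_div_iff] <;> norm_num

instance : IsFiniteMeasure piKR := ⟨by simp [piKR, ENNReal.add_lt_top]⟩

instance : IsFiniteMeasure piAT := ⟨by simp [piAT, ENNReal.add_lt_top]⟩

theorem piKR_map_fst : piKR.map Prod.fst = muEx := by
  simp only [piKR, muEx, Measure.map_add _ _ measurable_fst, Measure.map_smul,
    Measure.map_dirac' measurable_fst]
  rw [← ENNReal.one_fourth_add_one_fourth, add_smul]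
  abel

theorem piKR_map_snd : piKR.map Prod.snd = nuEx := by
  simp only [piKR, nuEx, Measure.map_add _ _ measurable_snd, Measure.map_smul,
    Measure.map_dirac' measurable_snd]

theorem piAT_map_fst : piAT.map Prod.fst = muEx := by
  simp only [piAT, muEx, Measure.map_add _ _ measurable_fst, Measure.map_smul,
    Measure.map_dirac' measurable_fst]
  rw [← ENNReal.one_fourth_add_one_fourth, add_smul]
  abel

theorem piAT_map_snd : piAT.map Prod.snd = nuEx := by
  simp only [piAT, nuEx, Measure.map_add _ _ measurable_snd, Measure.map_smul,
    Measure.map_dirac' measurable_snd]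
  abel

theorem ae_piKR_snd_fst : ∀ᵐ q ∂piKR, q.2.1 = q.1.1 := by
  simp [piKR, ae_add_measure_iff]

theorem ae_piAT_snd_fst : ∀ᵐ q ∂piAT, q.2.1 = -q.1.1 := by
  simp [piAT, ae_add_measure_iff]

theorem isBicausal2_piKR : IsBicausal2 piKR :=
  isBicausal2_of_ae_eq measurable_id measurable_id ae_piKR_snd_fst
    (ae_piKR_snd_fst.mono fun _ h => h.symm)

theorem isBicausal2_piAT : IsBicausal2 piAT :=
  isBicausal2_of_ae_eq measurable_neg measurable_neg ae_piAT_snd_fst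
    (ae_piAT_snd_fst.mono fun _ h => by rw [h, neg_neg])

theorem integral_cost_piKR :
    ∫ q : (ℝ × ℝ) × (ℝ × ℝ), (|q.1.1 - q.2.1| ^ 2 + |q.1.2 - q.2.2| ^ 2) ∂piKR = 3 := by
  rw [piKR, integral_smul_dirac_add_four (by norm_num)]
  norm_num

theorem integral_cost_piAT :
    ∫ q : (ℝ × ℝ) × (ℝ × ℝ), (|q.1.1 - q.2.1| ^ 2 + |q.1.2 - q.2.2| ^ 2) ∂piAT = 2 := by
  rw [piAT, integral_smul_dirac_add_four (by norm_num)]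
  norm_num

theorem stmt_15 :
    (piKR.map Prod.fst = muEx ∧ piKR.map Prod.snd = nuEx ∧ IsBicausal2 piKR ∧
      piAT.map Prod.fst = muEx ∧ piAT.map Prod.snd = nuEx ∧ IsBicausal2 piAT) ∧
    ((∫ q : (ℝ × ℝ) × (ℝ × ℝ), (|q.1.1 - q.2.1| ^ 2 + |q.1.2 - q.2.2| ^ 2) ∂piKR) = 3 ∧
      (∫ q : (ℝ × ℝ) × (ℝ × ℝ), (|q.1.1 - q.2.1| ^ 2 + |q.1.2 - q.2.2| ^ 2) ∂piAT) = 2) ∧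
    sInf {x : ℝ | ∃ π : Measure ((ℝ × ℝ) × (ℝ × ℝ)),
        π.map Prod.fst = muEx ∧ π.map Prod.snd = nuEx ∧ IsBicausal2 π ∧
        x = ∫ q : (ℝ × ℝ) × (ℝ × ℝ), (|q.1.1 - q.2.1| ^ 2 + |q.1.2 - q.2.2| ^ 2) ∂π} ≤ 2 ∧
    sInf {x : ℝ | ∃ π : Measure ((ℝ × ℝ) × (ℝ × ℝ)),
        π.map Prod.fst = muEx ∧ π.map Prod.snd = nuEx ∧ IsBicausal2 π ∧
        x = ∫ q : (ℝ × ℝ) × (ℝ × ℝ), (|q.1.1 - q.2.1| ^ 2 + |q.1.2 - q.2.2| ^ 2) ∂π}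
      < ∫ q : (ℝ × ℝ) × (ℝ × ℝ), (|q.1.1 - q.2.1| ^ 2 + |q.1.2 - q.2.2| ^ 2) ∂piKR := by
  have hinf : sInf {x : ℝ | ∃ π : Measure ((ℝ × ℝ) × (ℝ × ℝ)),
      π.map Prod.fst = muEx ∧ π.map Prod.snd = nuEx ∧ IsBicausal2 π ∧
      x = ∫ q : (ℝ × ℝ) × (ℝ × ℝ), (|q.1.1 - q.2.1| ^ 2 + |q.1.2 - q.2.2| ^ 2) ∂π} ≤ 2 :=
    csInf_le ⟨0, fun _ ⟨_, _, _, _, hx⟩ => hx ▸ integral_nonneg fun _ => by positivity⟩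
      ⟨piAT, piAT_map_fst, piAT_map_snd, isBicausal2_piAT, integral_cost_piAT.symm⟩
  exact ⟨⟨piKR_map_fst, piKR_map_snd, isBicausal2_piKR, piAT_map_fst, piAT_map_snd,
    isBicausal2_piAT⟩, ⟨integral_cost_piKR, integral_cost_piAT⟩, hinf,
    integral_cost_piKR ▸ hinf.trans_lt (by norm_num)⟩

end
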